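/- Fix reals μ > 0, k > 0, η > 0, d and Δd, set g(d) := (1−d)² + η, and let ε, Δε be symmetric real 3×3 matrices with tr ε > 0. Define Δσ := g(d)[2μ Δε^dev + k (tr Δε) I] − 2(1−d)[2μ ε^dev + k (tr ε) I] Δd. If tr Δσ = 0, Δσ · ε^dev = 0 and Δσ · Δε = 0, then the updated deviatoric strain norm satisfies (ε + Δε)^dev · (ε + Δε)^dev = ε^dev · ε^dev + 4 (ε^dev · ε^dev) [ ((1−d)/g(d)) Δd + ((1−d)²/g(d)²) (Δd)² ]. -/

import Mathlib

/-!
Write `t = 2(1-d)Δd / g(d)`. Since `Δσ` is traceless, `Δσ · Δε = Δσ · Δε^dev`, and the spherical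
parts of `Δσ` are orthogonal to every deviator, so the two orthogonality conditions read
`Δε^dev · ε^dev = t |ε^dev|²` and `|Δε^dev|² = t (ε^dev · Δε^dev)`. Expanding
`|ε^dev + Δε^dev|²` then gives `(1 + t)² |ε^dev|²`.
-/

open Matrix

noncomputable def dev (A : Matrix (Fin 3) (Fin 3) ℝ) : Matrix (Fin 3) (Fin 3) ℝ :=
  A - (A.trace / 3) • (1 : Matrix (Fin 3) (Fin 3) ℝ)

noncomputable def frob (A B : Matrix (Fin 3) (Fin 3) ℝ) : ℝ := (Aᵀ * B).trace

section Deviator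

variable (A B C : Matrix (Fin 3) (Fin 3) ℝ)

lemma trace_dev : (dev A).trace = 0 := by
  simp [dev, trace_sub, trace_smul, trace_one]

lemma dev_add : dev (A + B) = dev A + dev B := by
  simp only [dev, trace_add, add_div, add_smul]
  abel

lemma frob_comm : frob A B = frob B A := by
  rw [frob, frob, ← trace_transpose (Aᵀ * B), transpose_mul, transpose_transpose]

lemma frob_add_left : frob (A + B) C = frob A C + frob B C := by
  simp [frob, transpose_add, add_mul]

lemma frob_add_right : frob A (B + C) = frob A B + frob A C := by
  simp [frob, mul_add]

lemma frob_sub_right : frob A (B - C) = frob A B - frob A C := by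
  simp [frob, mul_sub]

lemma frob_sub_left : frob (A - B) C = frob A C - frob B C := by
  simp [frob, transpose_sub, sub_mul]

lemma frob_smul_left (r : ℝ) : frob (r • A) B = r * frob A B := by
  simp [frob]

lemma frob_smul_right (r : ℝ) : frob A (r • B) = r * frob A B := by
  simp [frob]

lemma frob_one_left : frob 1 A = A.trace := by
  simp [frob]

lemma frob_one_right : frob A 1 = A.trace := by
  simp [frob]

lemma frob_dev_right : frob A (dev B) = frob A B - B.trace / 3 * A.trace := by
  rw [dev, frob_sub_right, frob_smul_right, frob_one_right]

lemma frob_dev_right_of_trace_eq_zero (hA : A.trace = 0) : frob A (dev B) = frob A B := by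
  rw [frob_dev_right, hA, mul_zero, sub_zero]

lemma frob_smul_dev_add_smul_one_dev (s a : ℝ) :
    frob (s • dev B + a • 1) (dev A) = s * frob (dev B) (dev A) := by
  rw [frob_add_left, frob_smul_left, frob_smul_left, frob_one_left, trace_dev, mul_zero, add_zero]

lemma frob_dev_add_self :
    frob (dev (A + B)) (dev (A + B))
      = frob (dev A) (dev A) + 2 * frob (dev A) (dev B) + frob (dev B) (dev B) := by
  rw [dev_add, frob_add_left, frob_add_right, frob_add_right, frob_comm (dev B) (dev A)]
  ring

end Deviator

lemma add_two_mul_add_eq_sq_mul {g c E X D : ℝ} (hg : g ≠ 0) (hX : g * X = c * E)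
    (hD : g * D = c * X) : E + 2 * X + D = (1 + c / g) ^ 2 * E := by
  have hX' : X = c / g * E := by field_simp; linarith
  have hD' : D = c / g * X := by field_simp; linarith
  rw [hD', hX']
  ring

theorem fixed_stress_updated_deviatoric_norm_general
    (μ k η d Δd : ℝ) (hμ : 0 < μ) (hη : 0 < η)
    (ε Δε : Matrix (Fin 3) (Fin 3) ℝ)
    (Δσ : Matrix (Fin 3) (Fin 3) ℝ)
    (hΔσ : Δσ = ((1 - d) ^ 2 + η) •
        ((2 * μ) • dev Δε + (k * Δε.trace) • (1 : Matrix (Fin 3) (Fin 3) ℝ))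
      - (2 * (1 - d) * Δd) •
        ((2 * μ) • dev ε + (k * ε.trace) • (1 : Matrix (Fin 3) (Fin 3) ℝ)))
    (h0 : Δσ.trace = 0) (h1 : frob Δσ (dev ε) = 0) (h2 : frob Δσ Δε = 0) :
    frob (dev (ε + Δε)) (dev (ε + Δε))
      = frob (dev ε) (dev ε)
        + 4 * frob (dev ε) (dev ε)
          * ((1 - d) / ((1 - d) ^ 2 + η) * Δd
            + (1 - d) ^ 2 / ((1 - d) ^ 2 + η) ^ 2 * Δd ^ 2) := by
  set g := (1 - d) ^ 2 + η
  set c := 2 * (1 - d) * Δd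
  have hg : g ≠ 0 := by positivity
  have hΔσ_dev (A : Matrix (Fin 3) (Fin 3) ℝ) :
      frob Δσ (dev A) = 2 * μ * (g * frob (dev Δε) (dev A) - c * frob (dev ε) (dev A)) := by
    rw [hΔσ, frob_sub_left, frob_smul_left, frob_smul_left, frob_smul_dev_add_smul_one_dev,
      frob_smul_dev_add_smul_one_dev]
    ring
  have orth (A : Matrix (Fin 3) (Fin 3) ℝ) (hA : frob Δσ (dev A) = 0) :
      g * frob (dev Δε) (dev A) = c * frob (dev ε) (dev A) :=
    sub_eq_zero.mp ((mul_eq_zero.mp ((hΔσ_dev A).symm.trans hA)).resolve_left (by positivity))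
  have hX := orth ε h1
  have hD := orth Δε ((frob_dev_right_of_trace_eq_zero Δσ Δε h0).trans h2)
  rw [frob_comm (dev Δε) (dev ε)] at hX
  rw [frob_dev_add_self, add_two_mul_add_eq_sq_mul hg hX hD]
  field_simp
  ring

theorem fixed_stress_updated_deviatoric_norm
    (μ k η d Δd : ℝ) (hμ : 0 < μ) (hk : 0 < k) (hη : 0 < η)
    (ε Δε : Matrix (Fin 3) (Fin 3) ℝ) (hε : ε.IsSymm) (hΔε : Δε.IsSymm)
    (htr : 0 < ε.trace)
    (Δσ : Matrix (Fin 3) (Fin 3) ℝ)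
    (hΔσ : Δσ = ((1 - d) ^ 2 + η) •
        ((2 * μ) • dev Δε + (k * Δε.trace) • (1 : Matrix (Fin 3) (Fin 3) ℝ))
      - (2 * (1 - d) * Δd) •
        ((2 * μ) • dev ε + (k * ε.trace) • (1 : Matrix (Fin 3) (Fin 3) ℝ)))
    (h0 : Δσ.trace = 0) (h1 : frob Δσ (dev ε) = 0) (h2 : frob Δσ Δε = 0) :
    frob (dev (ε + Δε)) (dev (ε + Δε))
      = frob (dev ε) (dev ε)
        + 4 * frob (dev ε) (dev ε)
          * ((1 - d) / ((1 - d) ^ 2 + η) * Δd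
            + (1 - d) ^ 2 / ((1 - d) ^ 2 + η) ^ 2 * Δd ^ 2) :=
  fixed_stress_updated_deviatoric_norm_general μ k η d Δd hμ hη ε Δε Δσ hΔσ h0 h1 h2
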